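/- For a smooth path t ↦ ρ_t of nondegenerate 2-forms with ρ_t∧ρ_t > 0 on an oriented Riemannian 4-manifold, with ρ₀ = ρ and derivative ρ̂ at t = 0, the derivative of Θ^{ρ_t} := (*ρ_t)/u_t - (1/2)|ρ_t/u_t|²ρ_t at t = 0 equals (ρ̂ + *^ρ ρ̂)/u - |ρ⁺/u|² ρ̂, where u := dvol_ρ/dvol and *^ρ is the Hodge star of the metric g^ρ determined by ρ. -/

import Mathlib

open Matrix MeasureTheory

noncomputable section

/-- Vectors in ℝ⁴. -/
abbrev V4 : Type := Fin 4 → ℝ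

/-- 2-forms on ℝ⁴, represented by their (antisymmetric) coefficient matrices. -/
abbrev Mat4 : Type := Matrix (Fin 4) (Fin 4) ℝ

/-- The wedge product of two 2-forms, as the coefficient of dx0∧dx1∧dx2∧dx3. -/
def w22 (A B : Mat4) : ℝ :=
  A 0 1 * B 2 3 - A 0 2 * B 1 3 + A 0 3 * B 1 2 +
  A 2 3 * B 0 1 - A 1 3 * B 0 2 + A 1 2 * B 0 3

/-- The wedge product of a 1-form and a 3-form (3-forms are written in the
basis σ_m = ι(e_m)(dx0∧dx1∧dx2∧dx3)), as a multiple of dx0∧dx1∧dx2∧dx3. -/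
def w13 (l b : V4) : ℝ := l ⬝ᵥ b

/-- The wedge product of a 2-form and a 1-form, as a 3-form in the basis σ_m. -/
def w21 (A : Mat4) (l : V4) : V4 :=
  ![A 1 2 * l 3 - A 1 3 * l 2 + A 2 3 * l 1,
    -(A 0 2 * l 3 - A 0 3 * l 2 + A 2 3 * l 0),
    A 0 1 * l 3 - A 0 3 * l 1 + A 1 3 * l 0,
    -(A 0 1 * l 2 - A 0 2 * l 1 + A 1 2 * l 0)]

/-- Interior product of a vector with a 2-form. -/
def iota2 (v : V4) (A : Mat4) : V4 := Aᵀ.mulVec v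

/-- Interior product of a vector with a 4-form c·dx0∧dx1∧dx2∧dx3. -/
def iota4 (v : V4) (c : ℝ) : V4 := c • v

/-- The metric volume form of the inner product with Gram matrix G, as a
multiple of dx0∧dx1∧dx2∧dx3 (standard orientation). -/
def volScalar (G : Mat4) : ℝ := Real.sqrt G.det

/-- The inner product with Gram matrix G. -/
def bilin (G : Mat4) (v w : V4) : ℝ := v ⬝ᵥ G.mulVec w

/-- The induced inner product on 1-forms. -/
def ip1 (G : Mat4) (l m : V4) : ℝ := l ⬝ᵥ G⁻¹.mulVec m

/-- The induced inner product on 2-forms. -/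
def ip2 (G : Mat4) (A B : Mat4) : ℝ := (1 / 2) * (Aᵀ * G⁻¹ * B * G⁻¹).trace

/-- The wedge-duality involution on 2-forms (the Hodge star of the standard
metric), characterized by w22 A (dual2 B) = ip2 1 A B. -/
def dual2 (A : Mat4) : Mat4 :=
  !![0, A 2 3, -(A 1 3), A 1 2;
     -(A 2 3), 0, A 0 3, -(A 0 2);
     A 1 3, -(A 0 3), 0, A 0 1;
     -(A 1 2), A 0 2, -(A 0 1), 0]

/-- The Hodge star on 2-forms of the metric with Gram matrix G,
characterized by α ∧ (hodge2 G β) = ⟨α,β⟩_G dvol_G. -/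
def hodge2 (G : Mat4) (A : Mat4) : Mat4 := volScalar G • dual2 (G⁻¹ * A * G⁻¹)

/-- The Hodge star Λ¹ → Λ³ of G, characterized by λ ∧ (hodge1 G μ) = ⟨λ,μ⟩_G dvol_G. -/
def hodge1 (G : Mat4) (m : V4) : V4 := volScalar G • G⁻¹.mulVec m

/-- The Hodge star Λ³ → Λ¹ of G, characterized by hodge1 G (hodge3 G b) = -b. -/
def hodge3 (G : Mat4) (b : V4) : V4 := -((volScalar G)⁻¹ • G.mulVec b)

/-- A complex structure J (J² = -1) is compatible with the standard orientation. -/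
def posOrient (J : Mat4) : Prop :=
  ∃ v w : V4, 0 < (Matrix.of fun i k => ![v, J.mulVec v, w, J.mulVec w] k i).det

/-- The inner product on 2-forms induced by the standard metric. -/
def ip2std (A B : Mat4) : ℝ := (1 / 2) * (Aᵀ * B).trace

/-- The involution R^ρ of the space of 2-forms determined by a
nondegenerate 2-form ρ (with matrix P). -/
def Rmap (P A : Mat4) : Mat4 := A - (w22 A P / (w22 P P / 2)) • P

/-- The standard hyperKähler triple ω₁ = dx0∧dx1 + dx2∧dx3, etc. -/
def sW1 : Mat4 := !![0,1,0,0; -1,0,0,0; 0,0,0,1; 0,0,-1,0]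
def sW2 : Mat4 := !![0,0,1,0; 0,0,0,-1; -1,0,0,0; 0,1,0,0]
def sW3 : Mat4 := !![0,0,0,1; 0,0,1,0; 0,-1,0,0; -1,0,0,0]

/-!
The derivative of `Θ` comes from the product rule, with `u̇ = (ρ ∧ ρ̂) / dvol` and
`(d/dt)|ρ|² = 2⟨ρ, ρ̂⟩`. Expanding `⋆^ρ ρ̂ = R^ρ ⋆ R^ρ ρ̂` turns the claimed formula into the same
combination of `⋆ρ̂`, `⋆ρ`, `ρ` and `ρ̂`, using only `α ∧ ⋆β = ⟨α, β⟩ dvol` and `⋆⋆ = 1` on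
2-forms; in particular `|ρ⁺|² = |ρ|²/2 + u`, so the terms `ρ̂/u` cancel. The identity `⋆⋆ = 1`
follows from the transformation law `M (dual2 (Mᵀ A M)) Mᵀ = det M • dual2 A` of the flat
duality, a polynomial identity in the entries.
-/

theorem Matrix.det_fin_four {R : Type*} [CommRing R] (A : Matrix (Fin 4) (Fin 4) R) :
    A.det =
      A 0 0 * (A 1 1 * (A 2 2 * A 3 3 - A 2 3 * A 3 2) - A 1 2 * (A 2 1 * A 3 3 - A 2 3 * A 3 1)
        + A 1 3 * (A 2 1 * A 3 2 - A 2 2 * A 3 1))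
      - A 0 1 * (A 1 0 * (A 2 2 * A 3 3 - A 2 3 * A 3 2) - A 1 2 * (A 2 0 * A 3 3 - A 2 3 * A 3 0)
        + A 1 3 * (A 2 0 * A 3 2 - A 2 2 * A 3 0))
      + A 0 2 * (A 1 0 * (A 2 1 * A 3 3 - A 2 3 * A 3 1) - A 1 1 * (A 2 0 * A 3 3 - A 2 3 * A 3 0)
        + A 1 3 * (A 2 0 * A 3 1 - A 2 1 * A 3 0))
      - A 0 3 * (A 1 0 * (A 2 1 * A 3 2 - A 2 2 * A 3 1) - A 1 1 * (A 2 0 * A 3 2 - A 2 2 * A 3 0)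
        + A 1 2 * (A 2 0 * A 3 1 - A 2 1 * A 3 0)) := by
  rw [Matrix.det_succ_row_zero]
  simp [Fin.sum_univ_succ, Matrix.det_fin_three, Fin.succAbove]
  ring

section SkewForms

variable {A B : Mat4}

lemma eq_of_transpose_eq_neg (hA : Aᵀ = -A) :
    A = !![0, A 0 1, A 0 2, A 0 3;
           -(A 0 1), 0, A 1 2, A 1 3;
           -(A 0 2), -(A 1 2), 0, A 2 3;
           -(A 0 3), -(A 1 3), -(A 2 3), 0] := by
  have h i j : A j i = -A i j := by simpa using congrFun (congrFun hA i) j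
  ext i j
  fin_cases i <;> fin_cases j <;> simp <;>
    first | exact h _ _ | linarith [h 0 0, h 1 1, h 2 2, h 3 3]

lemma dual2_transpose (A : Mat4) : (dual2 A)ᵀ = -dual2 A := by
  ext i j; fin_cases i <;> fin_cases j <;> simp [dual2]

lemma dual2_dual2 (hA : Aᵀ = -A) : dual2 (dual2 A) = A := by
  rw [eq_of_transpose_eq_neg hA]
  ext i j; fin_cases i <;> fin_cases j <;> simp [dual2]

lemma dual2_sub (A B : Mat4) : dual2 (A - B) = dual2 A - dual2 B := by
  ext i j; fin_cases i <;> fin_cases j <;> simp [dual2] <;> ring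

lemma dual2_smul (c : ℝ) (A : Mat4) : dual2 (c • A) = c • dual2 A := by
  ext i j; fin_cases i <;> fin_cases j <;> simp [dual2]

lemma dual2_congr (M : Mat4) (hA : Aᵀ = -A) :
    M * dual2 (Mᵀ * A * M) * Mᵀ = M.det • dual2 A := by
  rw [eq_of_transpose_eq_neg hA, Matrix.det_fin_four]
  ext i j
  fin_cases i <;> fin_cases j <;> simp [dual2, Matrix.mul_apply, Fin.sum_univ_four] <;> ring

lemma w22_comm (A B : Mat4) : w22 A B = w22 B A := by
  simp only [w22]; ring

lemma w22_sub_left (A B C : Mat4) : w22 (A - B) C = w22 A C - w22 B C := by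
  simp only [w22, Matrix.sub_apply]; ring

lemma w22_smul_left (c : ℝ) (A B : Mat4) : w22 (c • A) B = c * w22 A B := by
  simp only [w22, Matrix.smul_apply, smul_eq_mul]; ring

lemma w22_dual2 (hA : Aᵀ = -A) (hB : Bᵀ = -B) : w22 A (dual2 B) = ip2std A B := by
  rw [eq_of_transpose_eq_neg hA, eq_of_transpose_eq_neg hB]
  simp [w22, dual2, ip2std, Matrix.trace, Matrix.mul_apply, Fin.sum_univ_four]
  ring

lemma ip2std_comm (A B : Mat4) : ip2std A B = ip2std B A := by
  rw [ip2std, ip2std, ← Matrix.trace_transpose, Matrix.transpose_mul, Matrix.transpose_transpose]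

end SkewForms

section Hodge

variable {G : Mat4}

lemma Matrix.PosDef.isSymm {n : Type*} [Fintype n] {G : Matrix n n ℝ} (hG : G.PosDef) :
    G.IsSymm :=
  isHermitian_iff_isSymm.mp hG.isHermitian

lemma volScalar_pos (hG : G.PosDef) : 0 < volScalar G := Real.sqrt_pos.mpr hG.det_pos

lemma volScalar_sq_mul_det_inv (hG : G.PosDef) : volScalar G ^ 2 * G⁻¹.det = 1 := by
  rw [volScalar, Real.sq_sqrt hG.det_pos.le, mul_comm]
  exact Matrix.det_nonsing_inv_mul_det _ hG.det_pos.ne'.isUnit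

lemma hodge2_transpose (G A : Mat4) : (hodge2 G A)ᵀ = -hodge2 G A := by
  rw [hodge2, Matrix.transpose_smul, dual2_transpose, smul_neg]

lemma hodge2_sub (G A B : Mat4) : hodge2 G (A - B) = hodge2 G A - hodge2 G B := by
  rw [hodge2, hodge2, hodge2, Matrix.mul_sub, Matrix.sub_mul, dual2_sub, smul_sub]

lemma hodge2_smul (G : Mat4) (c : ℝ) (A : Mat4) : hodge2 G (c • A) = c • hodge2 G A := by
  rw [hodge2, hodge2, Matrix.mul_smul, Matrix.smul_mul, dual2_smul, smul_comm]

lemma transpose_mul_mul_eq_neg {H A : Mat4} (hH : H.IsSymm) (hA : Aᵀ = -A) :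
    (H * A * H)ᵀ = -(H * A * H) := by
  simp [Matrix.transpose_mul, hH.eq, hA, Matrix.mul_assoc]

lemma ip2_eq_ip2std (hG : G.IsSymm) (A B : Mat4) : ip2 G A B = ip2std (G⁻¹ * A * G⁻¹) B := by
  rw [ip2, ip2std, Matrix.transpose_mul, Matrix.transpose_mul, hG.inv.eq,
    ← Matrix.trace_mul_comm]
  simp only [Matrix.mul_assoc]

lemma ip2_comm (hG : G.IsSymm) (A B : Mat4) : ip2 G A B = ip2 G B A := by
  rw [ip2, ip2, ← Matrix.trace_transpose]
  simp only [Matrix.transpose_mul, Matrix.transpose_transpose, hG.inv.eq]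
  rw [Matrix.trace_mul_comm]
  simp only [Matrix.mul_assoc]

lemma ip2_add_left (G A B C : Mat4) : ip2 G (A + B) C = ip2 G A C + ip2 G B C := by
  simp only [ip2, Matrix.transpose_add, Matrix.add_mul, Matrix.trace_add]; ring

lemma ip2_smul_left (G : Mat4) (c : ℝ) (A B : Mat4) : ip2 G (c • A) B = c * ip2 G A B := by
  simp only [ip2, Matrix.transpose_smul, Matrix.smul_mul, Matrix.trace_smul, smul_eq_mul]; ring

lemma w22_hodge2 (hG : G.IsSymm) {A B : Mat4} (hA : Aᵀ = -A) (hB : Bᵀ = -B) :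
    w22 A (hodge2 G B) = volScalar G * ip2 G A B := by
  rw [hodge2, w22_comm, w22_smul_left, w22_comm, w22_dual2 hA (transpose_mul_mul_eq_neg hG.inv hB),
    ip2std_comm, ← ip2_eq_ip2std hG, ip2_comm hG]

lemma hodge2_hodge2 (hG : G.PosDef) {A : Mat4} (hA : Aᵀ = -A) : hodge2 G (hodge2 G A) = A := by
  calc hodge2 G (hodge2 G A)
      = volScalar G ^ 2 • dual2 (G⁻¹ * dual2 (G⁻¹ * A * G⁻¹) * G⁻¹) := by
        rw [hodge2, hodge2, Matrix.mul_smul, Matrix.smul_mul, dual2_smul, smul_smul, sq]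
    _ = A := by
        have h := dual2_congr G⁻¹ hA
        rw [hG.isSymm.inv.eq] at h
        rw [h, dual2_smul, dual2_dual2 hA, smul_smul, volScalar_sq_mul_det_inv hG, one_smul]

lemma ip2_add_right (G A B C : Mat4) : ip2 G A (B + C) = ip2 G A B + ip2 G A C := by
  simp only [ip2, Matrix.mul_add, Matrix.add_mul, Matrix.trace_add]; ring

lemma ip2_smul_right (G : Mat4) (c : ℝ) (A B : Mat4) : ip2 G A (c • B) = c * ip2 G A B := by
  simp only [ip2, Matrix.mul_smul, Matrix.smul_mul, Matrix.trace_smul, smul_eq_mul]; ring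

lemma ip2_hodge2_right (hG : G.PosDef) {A : Mat4} (hA : Aᵀ = -A) :
    ip2 G A (hodge2 G A) = w22 A A / volScalar G := by
  have h := w22_hodge2 hG.isSymm hA (hodge2_transpose G A)
  rw [hodge2_hodge2 hG hA] at h
  rw [h, mul_div_cancel_left₀ _ (volScalar_pos hG).ne']

lemma ip2_hodge2_hodge2 (hG : G.PosDef) {A : Mat4} (hA : Aᵀ = -A) :
    ip2 G (hodge2 G A) (hodge2 G A) = ip2 G A A := by
  have h := w22_hodge2 hG.isSymm (hodge2_transpose G A) (hodge2_transpose G A)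
  rw [hodge2_hodge2 hG hA, w22_comm, w22_hodge2 hG.isSymm hA hA] at h
  exact (mul_left_cancel₀ (volScalar_pos hG).ne' h).symm

lemma ip2_selfDualPart (hG : G.PosDef) {A : Mat4} (hA : Aᵀ = -A) :
    ip2 G ((2:ℝ)⁻¹ • (A + hodge2 G A)) ((2:ℝ)⁻¹ • (A + hodge2 G A)) =
      ip2 G A A / 2 + w22 A A / (2 * volScalar G) := by
  simp only [ip2_smul_left, ip2_smul_right, ip2_add_left, ip2_add_right]
  rw [ip2_comm hG.isSymm (hodge2 G A) A, ip2_hodge2_right hG hA, ip2_hodge2_hodge2 hG hA]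
  field_simp
  ring

lemma Rmap_hodge2_Rmap (hG : G.IsSymm) {P X : Mat4} (hP : Pᵀ = -P) (hX : Xᵀ = -X) :
    let k := w22 X P / (w22 P P / 2)
    Rmap P (hodge2 G (Rmap P X)) = hodge2 G X - k • hodge2 G P -
      (volScalar G * (ip2 G P X - k * ip2 G P P) / (w22 P P / 2)) • P := by
  intro k
  have hRX : hodge2 G (Rmap P X) = hodge2 G X - k • hodge2 G P := by
    rw [Rmap, hodge2_sub, hodge2_smul]
  rw [Rmap, hRX, w22_sub_left, w22_smul_left, w22_comm, w22_hodge2 hG hP hX, w22_comm,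
    w22_hodge2 hG hP hP, mul_sub, mul_left_comm k]

end Hodge

def HasEntrywiseDerivAt {m n : Type*} (A : ℝ → Matrix m n ℝ) (A' : Matrix m n ℝ) (x : ℝ) :
    Prop :=
  ∀ i j, HasDerivAt (fun t => A t i j) (A' i j) x

namespace HasEntrywiseDerivAt

variable {m n p : Type*} {A B : ℝ → Matrix m n ℝ} {A' B' : Matrix m n ℝ} {x : ℝ}

lemma const (C : Matrix m n ℝ) (x : ℝ) : HasEntrywiseDerivAt (fun _ => C) 0 x :=
  fun i j => hasDerivAt_const x (C i j)

lemma transpose (hA : HasEntrywiseDerivAt A A' x) :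
    HasEntrywiseDerivAt (fun t => (A t)ᵀ) A'ᵀ x :=
  fun i j => hA j i

lemma sub (hA : HasEntrywiseDerivAt A A' x) (hB : HasEntrywiseDerivAt B B' x) :
    HasEntrywiseDerivAt (fun t => A t - B t) (A' - B') x :=
  fun i j => (hA i j).sub (hB i j)

lemma smul {f : ℝ → ℝ} {f' : ℝ} (hf : HasDerivAt f f' x) (hA : HasEntrywiseDerivAt A A' x) :
    HasEntrywiseDerivAt (fun t => f t • A t) (f' • A x + f x • A') x :=
  fun i j => (hf.mul (hA i j)).congr_deriv (by simp)

lemma const_smul (c : ℝ) (hA : HasEntrywiseDerivAt A A' x) :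
    HasEntrywiseDerivAt (fun t => c • A t) (c • A') x :=
  fun i j => (hA i j).const_mul c

lemma mul [Fintype n] {A : ℝ → Matrix m n ℝ} {B : ℝ → Matrix n p ℝ} {A' : Matrix m n ℝ}
    {B' : Matrix n p ℝ} (hA : HasEntrywiseDerivAt A A' x) (hB : HasEntrywiseDerivAt B B' x) :
    HasEntrywiseDerivAt (fun t => A t * B t) (A' * B x + A x * B') x := by
  intro i j
  simp only [Matrix.mul_apply, Matrix.add_apply, ← Finset.sum_add_distrib]
  exact HasDerivAt.fun_sum fun k _ => (hA i k).mul (hB k j)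

lemma trace [Fintype n] {A : ℝ → Matrix n n ℝ} {A' : Matrix n n ℝ}
    (hA : HasEntrywiseDerivAt A A' x) : HasDerivAt (fun t => (A t).trace) A'.trace x := by
  simp only [Matrix.trace, Matrix.diag]
  exact HasDerivAt.fun_sum fun k _ => hA k k

lemma neg (hA : HasEntrywiseDerivAt A A' x) : HasEntrywiseDerivAt (fun t => -A t) (-A') x :=
  fun i j => (hA i j).neg

lemma transpose_eq_neg {A : ℝ → Matrix n n ℝ} {A' : Matrix n n ℝ}
    (hA : HasEntrywiseDerivAt A A' x) (hskew : ∀ t, (A t)ᵀ = -A t) : A'ᵀ = -A' := by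
  have hT := hA.transpose
  simp only [hskew] at hT
  ext i j
  exact (hT i j).unique (hA.neg i j)

section TwoForms

variable {A B : ℝ → Mat4} {A' B' : Mat4}

lemma dual2 (hA : HasEntrywiseDerivAt A A' x) :
    HasEntrywiseDerivAt (fun t => dual2 (A t)) (dual2 A') x := by
  intro i j
  fin_cases i <;> fin_cases j <;> simp only [_root_.dual2, Matrix.of_apply, Matrix.cons_val',
    Matrix.cons_val_zero, Matrix.cons_val_one, Matrix.cons_val_two, Matrix.cons_val_three,
    Matrix.empty_val', Matrix.cons_val_fin_one, Fin.zero_eta, Fin.mk_one,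
    Fin.reduceFinMk, Fin.isValue] <;>
    first
      | exact hasDerivAt_const _ _
      | exact hA _ _
      | exact (hA _ _).neg

lemma hodge2 (G : Mat4) (hA : HasEntrywiseDerivAt A A' x) :
    HasEntrywiseDerivAt (fun t => hodge2 G (A t)) (hodge2 G A') x := by
  have h := (((const G⁻¹ x).mul hA).mul (const G⁻¹ x)).dual2.const_smul (volScalar G)
  simpa [_root_.hodge2] using h

lemma w22 (hA : HasEntrywiseDerivAt A A' x) (hB : HasEntrywiseDerivAt B B' x) :
    HasDerivAt (fun t => w22 (A t) (B t)) (w22 A' (B x) + w22 (A x) B') x := by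
  have h := (((((((hA 0 1).mul (hB 2 3)).sub ((hA 0 2).mul (hB 1 3))).add
    ((hA 0 3).mul (hB 1 2))).add ((hA 2 3).mul (hB 0 1))).sub
    ((hA 1 3).mul (hB 0 2))).add ((hA 1 2).mul (hB 0 3)))
  exact h.congr_deriv (by simp only [_root_.w22]; ring)

lemma ip2 (G : Mat4) (hA : HasEntrywiseDerivAt A A' x) (hB : HasEntrywiseDerivAt B B' x) :
    HasDerivAt (fun t => ip2 G (A t) (B t)) (ip2 G A' (B x) + ip2 G (A x) B') x := by
  have h := ((((hA.transpose.mul (const G⁻¹ x)).mul hB).mul (const G⁻¹ x)).trace).const_mul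
    (1 / 2 : ℝ)
  refine h.congr_deriv ?_
  simp only [_root_.ip2, Matrix.mul_zero, add_zero, Matrix.add_mul, Matrix.trace_add]
  ring

end TwoForms

end HasEntrywiseDerivAt

-- The right side is the product-rule derivative of `Θ` at `ρ = P`, `ρ̇ = X`, `u̇ = u'`.
lemma theta_variation_eq {G P X : Mat4} (hG : G.PosDef) (hP : Pᵀ = -P) (hX : Xᵀ = -X)
    (ha : w22 P P ≠ 0) {u u' : ℝ} (hu : u = w22 P P / (2 * volScalar G))
    (hu' : u' = w22 P X / volScalar G) :
    u⁻¹ • (X + Rmap P (hodge2 G (Rmap P X))) -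
        (ip2 G ((2:ℝ)⁻¹ • (P + hodge2 G P)) ((2:ℝ)⁻¹ • (P + hodge2 G P)) / u ^ 2) • X =
      (-u' / u ^ 2) • hodge2 G P + u⁻¹ • hodge2 G X -
        ((ip2 G P X / u ^ 2 - ip2 G P P * u' / u ^ 3) • P + (2⁻¹ * (ip2 G P P / u ^ 2)) • X) := by
  have hs := (volScalar_pos hG).ne'
  rw [Rmap_hodge2_Rmap hG.isSymm hP hX, ip2_selfDualPart hG hP, w22_comm X P, hu, hu']
  ext i j
  simp only [Matrix.add_apply, Matrix.sub_apply, Matrix.smul_apply, smul_eq_mul]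
  field_simp
  ring

/-- the derivative at t = 0 of Θ^{ρ_t} along a path of
nondegenerate 2-forms with ρ₀ = ρ, ∂_t ρ_t|₀ = ρ̂, is
(ρ̂ + *^ρ ρ̂)/u - |ρ⁺/u|² ρ̂, where *^ρ = R^ρ ∘ *_g ∘ R^ρ. -/
theorem Theta_derivative (G : Mat4) (hG : G.PosDef)
    (ρ : ℝ → Mat4) (hanti : ∀ t, (ρ t)ᵀ = -(ρ t))
    (hndg : ∀ t, 0 < w22 (ρ t) (ρ t))
    (P : Mat4) (hP : ρ 0 = P)
    (rhat : Mat4) (hderiv : ∀ i j, HasDerivAt (fun t => ρ t i j) (rhat i j) 0) :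
    let u : ℝ → ℝ := fun t => w22 (ρ t) (ρ t) / (2 * volScalar G)
    let Θ : ℝ → Mat4 := fun t =>
      (u t)⁻¹ • hodge2 G (ρ t) - (2⁻¹ * (ip2 G (ρ t) (ρ t) / (u t) ^ 2)) • ρ t
    let Pp := (2:ℝ)⁻¹ • (P + hodge2 G P)
    let D := (u 0)⁻¹ • (rhat + Rmap P (hodge2 G (Rmap P rhat))) -
      (ip2 G Pp Pp / (u 0) ^ 2) • rhat
    ∀ i j, HasDerivAt (fun t => Θ t i j) (D i j) 0 := by
  intro u Θ Pp D
  have hρ : HasEntrywiseDerivAt ρ rhat 0 := hderiv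
  have hPskew : Pᵀ = -P := hP ▸ hanti 0
  have hXskew : rhatᵀ = -rhat := hρ.transpose_eq_neg hanti
  have ha : w22 P P ≠ 0 := hP ▸ (hndg 0).ne'
  have hu0 : u 0 = w22 P P / (2 * volScalar G) := by simp only [u, hP]
  have hu0ne : u 0 ≠ 0 := by
    rw [hu0]; exact div_ne_zero ha (mul_ne_zero two_ne_zero (volScalar_pos hG).ne')
  have hu : HasDerivAt u (w22 P rhat / volScalar G) 0 :=
    ((hρ.w22 hρ).div_const _).congr_deriv (by rw [hP, w22_comm rhat P]; field_simp; ring)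
  have hq : HasDerivAt (fun t => 2⁻¹ * (ip2 G (ρ t) (ρ t) / u t ^ 2))
      (ip2 G P rhat / u 0 ^ 2 - ip2 G P P * (w22 P rhat / volScalar G) / u 0 ^ 3) 0 :=
    (((hρ.ip2 G hρ).div (hu.pow 2) (pow_ne_zero 2 hu0ne)).const_mul 2⁻¹).congr_deriv
      (by simp only [Pi.pow_apply]; rw [hP, ip2_comm hG.isSymm rhat P]; field_simp; ring)
  have hΘ := ((HasEntrywiseDerivAt.smul (hu.inv hu0ne) (hρ.hodge2 G)).sub
    (HasEntrywiseDerivAt.smul hq hρ))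
  rwa [hP, Pi.inv_apply, ← theta_variation_eq hG hPskew hXskew ha hu0 rfl] at hΘ

end
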